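/- arXiv:2605.17122 — 6 statements merged into one kernel-verified Lean document; each statement's English description precedes it below -/
import Mathlib

section
/- Let q = 2n+1 be an odd prime with n ≥ 1, and let t be a nonzero element of ZMod q. Then the sum of the Lee weights of the elements a·t for a = 1, 2, …, n equals n(n+1)/2; that is, ∑_{a=1}^{n} ‖a·t‖_q = n(n+1)/2. In particular, every nonzero codeword c_t = (t, 2t, …, nt) of the linear code over ZMod q generated by the vector (1, 2, …, n) has the same Lee weight n(n+1)/2. -/
open Finset

/-- The Lee weight of `x : ZMod q`: `min(x.val, q - x.val)`. -/
def leeWt (q : ℕ) (x : ZMod q) : ℕ := min x.val (q - x.val)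

lemma leeWt_neg (q : ℕ) [NeZero q] (x : ZMod q) : leeWt q (-x) = leeWt q x := by
  unfold leeWt
  rcases eq_or_ne x 0 with h | h
  · simp [h]
  · have hv := ZMod.val_lt x
    rw [ZMod.neg_val, if_neg h]
    omega

lemma leeWt_sum_aux (n q : ℕ) [NeZero q] (hn : 1 ≤ n) (hq : q = 2 * n + 1) (hp : q.Prime)
    (t : ZMod q) (ht : t ≠ 0) :
    2 * ∑ a ∈ Icc 1 n, leeWt q ((a : ZMod q) * t) = ∑ x : ZMod q, leeWt q x := by
  haveI : Fact q.Prime := ⟨hp⟩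
  -- second half equals first half
  have hhalf : ∑ a ∈ Ioc n (2 * n), leeWt q ((a : ZMod q) * t)
      = ∑ a ∈ Ioc 0 n, leeWt q ((a : ZMod q) * t) := by
    refine Finset.sum_nbij' (fun a => 2 * n + 1 - a) (fun a => 2 * n + 1 - a)
      ?_ ?_ ?_ ?_ ?_
    · intro a ha; simp only [mem_Ioc] at *; omega
    · intro a ha; simp only [mem_Ioc] at *; omega
    · intro a ha; simp only [mem_Ioc] at ha; show 2*n+1-(2*n+1-a) = a; omega
    · intro a ha; simp only [mem_Ioc] at ha; show 2*n+1-(2*n+1-a) = a; omega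
    · intro a ha
      simp only [mem_Ioc] at ha
      have hle : a ≤ 2 * n + 1 := by omega
      have : ((2 * n + 1 - a : ℕ) : ZMod q) = -(a : ZMod q) := by
        have : ((2 * n + 1 - a : ℕ) : ZMod q) = ((2 * n + 1 : ℕ) : ZMod q) - a := by
          rw [Nat.cast_sub hle]
        rw [this, ← hq, ZMod.natCast_self]
        ring
      rw [this, neg_mul, leeWt_neg]
  -- full sum over 1..2n equals sum over all of ZMod q
  have hfull : ∑ a ∈ Icc 1 (2 * n), leeWt q ((a : ZMod q) * t)
      = ∑ x : ZMod q, leeWt q x := by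
    have h1 : ∑ x : ZMod q, leeWt q x = ∑ x : ZMod q, leeWt q (x * t) :=
      (Equiv.sum_comp (Equiv.mulRight₀ t ht) (leeWt q)).symm
    have h2 : ∑ x : ZMod q, leeWt q (x * t)
        = ∑ a ∈ range q, leeWt q ((a : ZMod q) * t) := by
      refine Finset.sum_nbij' (fun x => x.val) (fun a => (a : ZMod q))
        ?_ ?_ ?_ ?_ ?_
      · intro x _; simp [ZMod.val_lt x]
      · intro a _; simp
      · intro x _; simp [ZMod.natCast_val, ZMod.cast_id]
      · intro a ha; simp only [mem_range] at ha; exact ZMod.val_cast_of_lt ha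
      · intro x _; simp [ZMod.natCast_val, ZMod.cast_id]
    have h3 : range q = insert 0 (Icc 1 (2 * n)) := by
      ext a; simp [hq]; omega
    have h0 : (0 : ℕ) ∉ Icc 1 (2 * n) := by simp
    rw [h1, h2, h3, Finset.sum_insert h0]
    have : leeWt q (((0 : ℕ) : ZMod q) * t) = 0 := by
      simp [leeWt]
    rw [this, zero_add]
  have hsplit : ∑ a ∈ Ioc 0 n, leeWt q ((a : ZMod q) * t)
      + ∑ a ∈ Ioc n (2 * n), leeWt q ((a : ZMod q) * t)
      = ∑ a ∈ Ioc 0 (2 * n), leeWt q ((a : ZMod q) * t) :=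
    Finset.sum_Ioc_consecutive _ (by omega) (by omega)
  have hIcc : Icc 1 n = Ioc 0 n := by ext a; simp; omega
  have hIcc2 : Icc 1 (2 * n) = Ioc 0 (2 * n) := by ext a; simp; omega
  rw [hIcc]
  rw [hIcc2] at hfull
  omega

/-- If `q = 2n+1` is an odd prime and `t ≠ 0` in `ZMod q`, then
`∑_{a=1}^{n} ‖a·t‖_q = n(n+1)/2`; in particular every nonzero codeword
`(t, 2t, …, nt)` of the code generated by `(1,…,n)` has Lee weight `n(n+1)/2`. -/
theorem stmt0 (n q : ℕ) (hn : 1 ≤ n) (hq : q = 2 * n + 1) (hp : q.Prime)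
    (t : ZMod q) (ht : t ≠ 0) :
    ∑ a ∈ Finset.Icc 1 n, leeWt q ((a : ZMod q) * t) = n * (n + 1) / 2 := by
  haveI : Fact q.Prime := ⟨hp⟩
  have h1 : (1 : ZMod q) ≠ 0 := one_ne_zero
  have key := leeWt_sum_aux n q hn hq hp t ht
  have key1 := leeWt_sum_aux n q hn hq hp 1 h1
  have hS1 : ∑ a ∈ Icc 1 n, leeWt q ((a : ZMod q) * 1) = ∑ a ∈ Icc 1 n, a := by
    refine Finset.sum_congr rfl fun a ha => ?_
    simp only [mem_Icc] at ha
    have hlt : a < q := by omega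
    rw [mul_one]
    unfold leeWt
    rw [ZMod.val_cast_of_lt hlt]
    omega
  have hgauss : ∑ a ∈ Icc 1 n, a = n * (n + 1) / 2 := by
    have hins : range (n + 1) = insert 0 (Icc 1 n) := by ext a; simp; omega
    have h0 : (0 : ℕ) ∉ Icc 1 n := by simp
    have hg := Finset.sum_range_id (n + 1)
    rw [hins, Finset.sum_insert h0, zero_add] at hg
    rw [hg, Nat.add_sub_cancel, Nat.mul_comm]
  rw [hS1, hgauss] at key1
  omega
end

section
/- Let m ≥ 3 be an odd integer and let t' be an integer with gcd(t', m) = 1. Then ∑_{j=1}^{(m−1)/2} ‖j·t'‖_m = (m²−1)/8, where j·t' is computed in ZMod m. -/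
/-- If `m ≥ 3` is odd and `gcd(t', m) = 1`, then
`∑_{j=1}^{(m-1)/2} ‖j·t'‖_m = (m²-1)/8`. -/
theorem stmt4 (m : ℕ) (t' : ℤ) (hm : 3 ≤ m) (hodd : Odd m)
    (hgcd : Int.gcd t' (m : ℤ) = 1) :
    ∑ j ∈ Finset.Icc 1 ((m - 1) / 2), leeWt m ((j : ZMod m) * ((t' : ℤ) : ZMod m))
      = (m ^ 2 - 1) / 8 := by
  haveI : NeZero m := ⟨by omega⟩
  set k := (m - 1) / 2 with hk
  have hm2 : m = 2 * k + 1 := by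
    obtain ⟨r, hr⟩ := hodd; omega
  set t : ZMod m := ((t' : ℤ) : ZMod m) with htdef
  have ht : IsUnit t := by
    have hcop : IsCoprime (t' : ℤ) (m : ℤ) := Int.isCoprime_iff_gcd_eq_one.mpr hgcd
    have h2 := hcop.map (Int.castRingHom (ZMod m))
    simp only [map_natCast, Int.coe_castRingHom, ZMod.natCast_self] at h2
    exact isCoprime_zero_right.mp h2
  have hcancel : ∀ x y : ZMod m, x * t = y * t → x = y := by
    intro x y h
    obtain ⟨u, hu⟩ := ht
    rw [← hu] at h
    exact (Units.mul_left_inj u).mp h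
  have htzero : ∀ x : ZMod m, x * t = 0 → x = 0 := by
    intro x h
    obtain ⟨u, hu⟩ := ht
    rw [← hu] at h
    exact (Units.mul_left_eq_zero u).mp h
  have hval : ∀ x : ZMod m, ((leeWt m x : ℕ) : ZMod m) = x ∨ ((leeWt m x : ℕ) : ZMod m) = -x := by
    intro x
    have hv : x.val < m := ZMod.val_lt x
    rcases min_cases x.val (m - x.val) with ⟨h1, _⟩ | ⟨h1, _⟩
    · left
      rw [leeWt, h1, ZMod.natCast_val, ZMod.cast_id]
    · right
      rw [leeWt, h1, Nat.cast_sub hv.le, ZMod.natCast_self, zero_sub, ZMod.natCast_val,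
        ZMod.cast_id]
  have hle : ∀ x : ZMod m, leeWt m x ≤ k := by
    intro x
    have := ZMod.val_lt x
    simp only [leeWt]
    omega
  have hpos : ∀ x : ZMod m, x ≠ 0 → 1 ≤ leeWt m x := by
    intro x hx
    have h0 : x.val ≠ 0 := fun h => hx ((ZMod.val_eq_zero x).mp h)
    have := ZMod.val_lt x
    simp only [leeWt]
    omega
  have hdet : ∀ x y : ZMod m, leeWt m x = leeWt m y → x = y ∨ x = -y := by
    intro x y h
    rcases hval x with h1 | h1 <;> rcases hval y with h2 | h2 <;> rw [h] at h1
    · left; rw [← h1]; exact h2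
    · right; rw [← h1]; exact h2
    · right; rw [← h2, h1, neg_neg]
    · left; exact neg_injective (h1.symm.trans h2)
  have hcastinj : ∀ a ∈ Finset.Icc 1 k, ∀ b ∈ Finset.Icc 1 k,
      leeWt m ((a : ZMod m) * t) = leeWt m ((b : ZMod m) * t) → a = b := by
    intro a ha b hb hab
    rw [Finset.mem_Icc] at ha hb
    have hcast : (a : ZMod m) = (b : ZMod m) ∨ (a : ZMod m) = -(b : ZMod m) := by
      rcases hdet _ _ hab with h | h
      · left; exact hcancel _ _ h
      · right; rw [← neg_mul] at h; exact hcancel _ _ h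
    rcases hcast with h | h
    · have := congrArg ZMod.val h
      rwa [ZMod.val_cast_of_lt (by omega), ZMod.val_cast_of_lt (by omega)] at this
    · exfalso
      have hsum : ((a + b : ℕ) : ZMod m) = 0 := by
        push_cast
        rw [h]; ring
      have hdvd : m ∣ a + b := (ZMod.natCast_eq_zero_iff _ _).mp hsum
      have := Nat.le_of_dvd (by omega) hdvd
      omega
  have hmaps : ∀ j ∈ Finset.Icc 1 k, leeWt m ((j : ZMod m) * t) ∈ Finset.Icc 1 k := by
    intro j hj
    rw [Finset.mem_Icc] at hj ⊢
    refine ⟨hpos _ ?_, hle _⟩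
    intro h0
    have hj0 : (j : ZMod m) = 0 := htzero _ h0
    have hd := (ZMod.natCast_eq_zero_iff _ _).mp hj0
    have := Nat.le_of_dvd (by omega) hd
    omega
  have himg : Finset.image (fun j : ℕ => leeWt m ((j : ZMod m) * t)) (Finset.Icc 1 k)
      = Finset.Icc 1 k := by
    apply Finset.eq_of_subset_of_card_le
    · intro x hx
      rw [Finset.mem_image] at hx
      obtain ⟨j, hj, rfl⟩ := hx
      exact hmaps j hj
    · rw [Finset.card_image_of_injOn (fun a ha b hb => hcastinj a ha b hb)]
  have hsum : ∑ j ∈ Finset.Icc 1 k, leeWt m ((j : ZMod m) * t)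
      = ∑ i ∈ Finset.Icc 1 k, i := by
    conv_rhs => rw [← himg]
    rw [Finset.sum_image hcastinj]
  rw [hsum]
  have hicc : ∑ i ∈ Finset.range (k + 1), i = ∑ i ∈ Finset.Icc 1 k, i := by
    have h1 : Finset.range (k + 1) = Finset.Icc 0 k := by
      rw [Finset.range_eq_Ico, Finset.Ico_add_one_right_eq_Icc]
    rw [h1, Finset.Icc_eq_cons_Ioc (Nat.zero_le k), Finset.sum_cons, ← Finset.Icc_add_one_left_eq_Ioc]
    simp
  have hg := Finset.sum_range_id_mul_two (k + 1)
  rw [hicc, Nat.add_sub_cancel] at hg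
  have hkk : (k + 1) * k = k * k + k := by ring
  rw [hkk] at hg
  have hmsq : m ^ 2 = 4 * (k * k) + 4 * k + 1 := by rw [hm2]; ring
  omega
end

section
/- Let g ≥ 1 and m ≥ 2 be integers and set q = g·m. Then for every integer a, the Lee weight in ZMod q of g·a equals g times the Lee weight in ZMod m of a; that is, ‖g·a‖_q = g·‖a‖_m. -/
theorem ZMod.val_intCast_natCast_mul (g m : ℕ) (a : ℤ) :
    (((g : ℤ) * a : ℤ) : ZMod (g * m)).val = g * (a : ZMod m).val := by
  rcases Nat.eq_zero_or_pos g with rfl | hg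
  · simp
  rcases Nat.eq_zero_or_pos m with rfl | hm
  · exact Int.natAbs_mul g a -- `ZMod 0` is `ℤ`, where `val` is `natAbs`
  have : NeZero m := ⟨hm.ne'⟩
  have : NeZero (g * m) := ⟨(Nat.mul_pos hg hm).ne'⟩
  have hmod : (g * a : ℤ) % ((g * m : ℕ) : ℤ) = g * (a % m) := by
    push_cast
    exact Int.mul_emod_mul_of_pos _ _ (by exact_mod_cast hg)
  refine Int.ofNat_inj.mp ?_
  rw [Nat.cast_mul, ZMod.val_intCast, ZMod.val_intCast, hmod]

theorem stmt5_general (g m : ℕ) (a : ℤ) :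
    leeWt (g * m) ((((g : ℤ) * a : ℤ) : ZMod (g * m))) = g * leeWt m ((a : ZMod m)) := by
  rw [leeWt, leeWt, ZMod.val_intCast_natCast_mul, ← Nat.mul_sub, Nat.mul_min_mul_left]

/-- For `g ≥ 1`, `m ≥ 2`, `q = g·m`, and any integer `a`:
`‖g·a‖_q = g·‖a‖_m`. -/
theorem stmt5 (g m : ℕ) (hg : 1 ≤ g) (hm : 2 ≤ m) (a : ℤ) :
    leeWt (g * m) ((((g : ℤ) * a : ℤ) : ZMod (g * m))) = g * leeWt m ((a : ZMod m)) :=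
  stmt5_general g m a
end

section
/- Let q = 2n+1 be an odd integer with n ≥ 1. Then the number of distinct values of ∑_{k=1}^{n} ‖k·t‖_q as t ranges over the integers 1 ≤ t ≤ q−1 equals τ(q) − 1, where τ(q) is the number of positive divisors of q. That is, the linear code over ZMod q generated by (1, 2, …, n) has exactly τ(q) − 1 distinct nonzero Lee weights. -/
namespace Stmt8Aux

open Finset

/-- Nat version of the Lee weight of `x mod q`. -/
def f (q x : ℕ) : ℕ := min (x % q) (q - x % q)

lemma f_add_eq {q a b : ℕ} (hq : 0 < q) (h : (a + b) % q = 0) : f q a = f q b := by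
  have h' : (a % q + b % q) % q = 0 := by rwa [Nat.add_mod] at h
  have ha : a % q < q := Nat.mod_lt _ hq
  have hb : b % q < q := Nat.mod_lt _ hq
  obtain ⟨c, hc⟩ := Nat.dvd_of_mod_eq_zero h'
  have hc2 : c < 2 := by
    by_contra hcon
    push_neg at hcon
    have : 2 * q ≤ q * c := by
      calc 2 * q = q * 2 := by ring
      _ ≤ q * c := Nat.mul_le_mul_left _ hcon
    omega
  interval_cases c <;> simp only [f] <;> omega

lemma sum_block (F : ℕ → ℕ) (m x : ℕ) :
    ∑ k ∈ range (m + x), F (k % m)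
      = ∑ j ∈ range m, F (j % m) + ∑ k ∈ range x, F (k % m) := by
  rw [range_eq_Ico, ← Finset.sum_Ico_consecutive _ (Nat.zero_le m) (Nat.le_add_right m x)]
  congr 1
  · rw [← range_eq_Ico]
  rw [Finset.sum_Ico_eq_sum_range]
  refine Finset.sum_congr (by congr 1; omega) fun k _ => ?_
  simp [Nat.add_mod_left]

lemma sum_mul (F : ℕ → ℕ) (m : ℕ) : ∀ e, ∑ k ∈ range (e * m), F (k % m)
    = e * ∑ j ∈ range m, F (j % m) := by
  intro e
  induction e with
  | zero => simp
  | succ e ih =>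
    have h : (e + 1) * m = m + e * m := by ring
    rw [h, sum_block, ih]
    ring

lemma sum_unit (G : ℕ → ℕ) {m u : ℕ} (hm : 0 < m) (hu : Nat.Coprime u m) :
    ∑ j ∈ range m, G (j * u % m) = ∑ j ∈ range m, G j := by
  rcases Nat.lt_or_ge m 2 with h1 | h1
  · have hm1 : m = 1 := by omega
    subst hm1
    simp
  · obtain ⟨s, -, hs⟩ := Nat.exists_mul_mod_eq_one_of_coprime hu h1
    refine Finset.sum_nbij' (fun a => a * u % m) (fun b => b * s % m) ?_ ?_ ?_ ?_ ?_
    · intro a _; exact Finset.mem_range.mpr (Nat.mod_lt _ hm)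
    · intro b _; exact Finset.mem_range.mpr (Nat.mod_lt _ hm)
    · intro a ha
      show a * u % m * s % m = a
      rw [Nat.mod_mul_mod, mul_assoc, Nat.mul_mod, hs, mul_one,
        Nat.mod_mod_of_dvd _ dvd_rfl, Nat.mod_eq_of_lt (Finset.mem_range.mp ha)]
    · intro b hb
      show b * s % m * u % m = b
      rw [Nat.mod_mul_mod, mul_assoc, mul_comm s u, Nat.mul_mod, hs, mul_one,
        Nat.mod_mod_of_dvd _ dvd_rfl, Nat.mod_eq_of_lt (Finset.mem_range.mp hb)]
    · intro a _; rfl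

lemma min_mul_right (a b d : ℕ) : min (a * d) (b * d) = min a b * d := by
  rcases le_total a b with h | h
  · rw [min_eq_left h, min_eq_left (Nat.mul_le_mul_right d h)]
  · rw [min_eq_right h, min_eq_right (Nat.mul_le_mul_right d h)]

/-- The full sum over `k ∈ [0, q)` of `f q (k*t)` where `t = d*t'`, `q = d*m`,
`gcd(t', m) = 1`. -/
lemma fullsum_eq {q d m t t' : ℕ} (hq : q = d * m) (ht : t = d * t')
    (hu : Nat.Coprime t' m) (hm : 0 < m) :
    ∑ k ∈ range q, f q (k * t) = d * (d * ∑ j ∈ range m, min j (m - j)) := by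
  subst hq; subst ht
  set G0 : ℕ → ℕ := fun x => min x (m - x) with hG0
  have key : ∀ k, f (d * m) (k * (d * t')) = d * G0 (k * t' % m) := by
    intro k
    have hmod : k * (d * t') % (d * m) = (k * t' % m) * d := by
      rw [show k * (d * t') = k * t' * d by ring, show d * m = m * d by ring,
        Nat.mul_mod_mul_right]
    have hlt : k * t' % m ≤ m := le_of_lt (Nat.mod_lt _ hm)
    unfold f
    rw [hmod]
    have hsub : d * m - k * t' % m * d = (m - k * t' % m) * d := by
      rw [Nat.sub_mul]
      congr 1
      ring
    rw [hsub, min_mul_right, hG0]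
    ring
  have keymod : ∀ k, G0 (k * t' % m) = G0 (k % m * t' % m) := by
    intro k
    rw [Nat.mod_mul_mod]
  calc ∑ k ∈ range (d * m), f (d * m) (k * (d * t'))
      = ∑ k ∈ range (d * m), d * G0 (k % m * t' % m) :=
        Finset.sum_congr rfl fun k _ => by rw [key k, keymod k]
    _ = d * ∑ k ∈ range (d * m), G0 (k % m * t' % m) := by rw [Finset.mul_sum]
    _ = d * (d * ∑ j ∈ range m, G0 (j % m * t' % m)) :=
        congrArg (d * ·) (sum_mul (fun j => G0 (j * t' % m)) m d)
    _ = d * (d * ∑ j ∈ range m, G0 (j * t' % m)) := by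
        have : ∑ j ∈ range m, G0 (j % m * t' % m) = ∑ j ∈ range m, G0 (j * t' % m) :=
          Finset.sum_congr rfl fun j hj => by
            rw [Nat.mod_eq_of_lt (Finset.mem_range.mp hj)]
        rw [this]
    _ = d * (d * ∑ j ∈ range m, G0 j) := by rw [sum_unit G0 hm hu]
    _ = d * (d * ∑ j ∈ range m, min j (m - j)) := rfl

/-- Evaluation of the basic Lee-weight sum for odd modulus `m = 2h+1`. -/
lemma sum_min_eval (h : ℕ) :
    4 * ∑ j ∈ range (2 * h + 1), min j (2 * h + 1 - j) = (2 * h + 1) ^ 2 - 1 := by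
  have hsplit : (2 * h + 1) = (h + 1) + h := by ring
  rw [hsplit, range_eq_Ico,
    ← Finset.sum_Ico_consecutive _ (Nat.zero_le (h + 1)) (by omega : h + 1 ≤ h + 1 + h)]
  have h1 : ∑ j ∈ Finset.Ico 0 (h + 1), min j ((h + 1) + h - j)
      = ∑ j ∈ range (h + 1), j := by
    rw [← range_eq_Ico]
    refine Finset.sum_congr rfl fun j hj => ?_
    have := Finset.mem_range.mp hj
    omega
  have h2 : ∑ j ∈ Finset.Ico (h + 1) (h + 1 + h), min j ((h + 1) + h - j)
      = ∑ i ∈ range h, (h - i) := by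
    rw [Finset.sum_Ico_eq_sum_range]
    refine Finset.sum_congr (by congr 1; omega) fun i hi => ?_
    have := Finset.mem_range.mp hi
    omega
  have h3 : ∑ i ∈ range h, (h - i) = ∑ i ∈ range (h + 1), i := by
    have hrefl := Finset.sum_range_reflect (fun j => j + 1) h
    have e1 : ∑ i ∈ range h, (h - i) = ∑ i ∈ range h, (h - 1 - i + 1) := by
      refine Finset.sum_congr rfl fun i hi => ?_
      have := Finset.mem_range.mp hi; omega
    have e2 : ∑ i ∈ range (h + 1), i = ∑ i ∈ range h, (i + 1) := by
      rw [Finset.sum_range_succ']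
      simp
    rw [e1, hrefl, ← e2]
  have hx : (∑ i ∈ range (h + 1), i) * 2 = (h + 1) * h := Finset.sum_range_id_mul_two (h + 1)
  rw [h1, h2, h3]
  have key : (h + 1 + h) ^ 2 = 4 * (∑ i ∈ range (h + 1), i + ∑ i ∈ range (h + 1), i) + 1 := by
    nlinarith [hx]
  omega

/-- The half-range sum doubles to the full-range sum. -/
lemma half_sum {q n : ℕ} (hq : q = 2 * n + 1) (t : ℕ) :
    ∑ k ∈ range q, f q (k * t) = 2 * ∑ k ∈ Finset.Icc 1 n, f q (k * t) := by
  have hq0 : 0 < q := by omega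
  have hIcc : ∑ k ∈ Finset.Icc 1 n, f q (k * t) = ∑ i ∈ range n, f q ((1 + i) * t) := by
    have h : Finset.Icc 1 n = Finset.Ico 1 (n + 1) := by rw [Finset.Ico_add_one_right_eq_Icc]
    rw [h, Finset.sum_Ico_eq_sum_range]
    simp
  rw [show range q = Finset.Ico 0 (2 * n + 1) by rw [hq, range_eq_Ico],
    ← Finset.sum_Ico_consecutive _ (Nat.zero_le (n + 1)) (by omega : n + 1 ≤ 2 * n + 1)]
  have p1 : ∑ k ∈ Finset.Ico 0 (n + 1), f q (k * t)
      = f q 0 + ∑ i ∈ range n, f q ((1 + i) * t) := by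
    rw [← range_eq_Ico, Finset.sum_range_succ']
    simp [add_comm]
  have p2 : ∑ k ∈ Finset.Ico (n + 1) (2 * n + 1), f q (k * t)
      = ∑ i ∈ range n, f q ((1 + i) * t) := by
    rw [Finset.sum_Ico_eq_sum_range]
    have heq : ∀ i ∈ range (2 * n + 1 - (n + 1)),
        f q ((n + 1 + i) * t) = f q ((n - i) * t) := by
      intro i hi
      have hi' : i < n := by have := Finset.mem_range.mp hi; omega
      refine f_add_eq hq0 ?_
      have h : (n + 1 + i) * t + (n - i) * t = q * t := by
        rw [← Nat.add_mul, hq]; congr 1; omega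
      rw [h, Nat.mul_mod, Nat.mod_self, Nat.zero_mul, Nat.zero_mod]
    rw [Finset.sum_congr rfl heq]
    have hrange : 2 * n + 1 - (n + 1) = n := by omega
    rw [hrange]
    have hrefl := Finset.sum_range_reflect (fun j => f q ((1 + j) * t)) n
    calc ∑ i ∈ range n, f q ((n - i) * t)
        = ∑ i ∈ range n, f q ((1 + (n - 1 - i)) * t) := by
          refine Finset.sum_congr rfl fun i hi => ?_
          have := Finset.mem_range.mp hi
          congr 2
          omega
      _ = ∑ i ∈ range n, f q ((1 + i) * t) := hrefl
  have hf0 : f q 0 = 0 := by simp [f]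
  rw [p1, p2, hIcc, hf0]
  ring

/-- The key weight formula: for a proper divisor `d` of odd `q = 2n+1`,
`8 * (half sum for t := d) = q² - d²`. -/
lemma weight_formula {q n d : ℕ} (hq : q = 2 * n + 1) (hd : d ∣ q) (hdq : d ≠ q) :
    8 * ∑ k ∈ Finset.Icc 1 n, f q (k * d) = q ^ 2 - d ^ 2 := by
  have hq0 : 0 < q := by omega
  have hd0 : 0 < d := Nat.pos_of_dvd_of_pos hd hq0
  obtain ⟨m, hm⟩ := hd
  have hm0 : 0 < m := by
    rcases Nat.eq_zero_or_pos m with h | h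
    · rw [h, mul_zero] at hm; omega
    · exact h
  have hmodd : m % 2 = 1 := by
    rcases Nat.even_or_odd m with ⟨c, hc⟩ | ho
    · exfalso
      have : q = 2 * (d * c) := by rw [hm, hc]; ring
      omega
    · exact Nat.odd_iff.mp ho
  have hfull : ∑ k ∈ range q, f q (k * d) = d * (d * ∑ j ∈ range m, min j (m - j)) :=
    fullsum_eq hm (show d = d * 1 by ring) (Nat.coprime_one_left m) hm0
  have hhalf := half_sum hq d
  set h := (m - 1) / 2 with hh
  have hm2 : m = 2 * h + 1 := by omega
  have heval := sum_min_eval h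
  rw [← hm2] at heval
  have e1 : 8 * ∑ k ∈ Finset.Icc 1 n, f q (k * d)
      = d * d * (4 * ∑ j ∈ range m, min j (m - j)) := by
    calc 8 * ∑ k ∈ Finset.Icc 1 n, f q (k * d)
        = 4 * (2 * ∑ k ∈ Finset.Icc 1 n, f q (k * d)) := by ring
      _ = 4 * ∑ k ∈ range q, f q (k * d) := by rw [← hhalf]
      _ = 4 * (d * (d * ∑ j ∈ range m, min j (m - j))) := by rw [hfull]
      _ = d * d * (4 * ∑ j ∈ range m, min j (m - j)) := by ring
  rw [e1, heval]
  have hqsq : q ^ 2 = d * d * m ^ 2 := by rw [hm]; ring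
  rw [hqsq]
  have h1 : 1 ≤ m ^ 2 := Nat.one_le_pow _ _ hm0
  have h2 : d ^ 2 ≤ d * d * m ^ 2 := by nlinarith
  zify [h1, h2]
  ring

/-- Invariance: the weight of `t` only depends on `gcd t q`. -/
lemma weight_gcd {q n t : ℕ} (hq : q = 2 * n + 1) (ht : 0 < t) :
    ∑ k ∈ Finset.Icc 1 n, f q (k * t)
      = ∑ k ∈ Finset.Icc 1 n, f q (k * Nat.gcd t q) := by
  have hq0 : 0 < q := by omega
  set d := Nat.gcd t q with hd
  have hd0 : 0 < d := Nat.gcd_pos_of_pos_left q ht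
  have hdq : d ∣ q := Nat.gcd_dvd_right t q
  have hdt : d ∣ t := Nat.gcd_dvd_left t q
  set m := q / d with hm
  have hqm : q = d * m := by rw [hm, Nat.mul_div_cancel' hdq]
  have hm0 : 0 < m := by
    rcases Nat.eq_zero_or_pos m with h | h
    · rw [h, mul_zero] at hqm; omega
    · exact h
  set t' := t / d with ht'
  have htt : t = d * t' := by rw [ht', Nat.mul_div_cancel' hdt]
  have hcop : Nat.Coprime t' m := by
    rw [ht', hm, hd]
    exact Nat.coprime_div_gcd_div_gcd hd0
  have h1 := fullsum_eq hqm htt hcop hm0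
  have h2 := fullsum_eq hqm (show d = d * 1 by ring) (Nat.coprime_one_left m) hm0
  have h3 := half_sum hq t
  have h4 := half_sum hq d
  have h5 := h1.trans h2.symm
  rw [h3, h4] at h5
  omega

end Stmt8Aux

open Stmt8Aux in
/-- For `q = 2n+1` odd, the code over `ZMod q` generated by `(1, 2, …, n)` has
exactly `τ(q) - 1` distinct nonzero Lee weights. -/
theorem stmt8 (n q : ℕ) (hn : 1 ≤ n) (hq : q = 2 * n + 1) :
    {w : ℕ | ∃ t : ℕ, 1 ≤ t ∧ t ≤ q - 1 ∧
        w = ∑ k ∈ Finset.Icc 1 n, leeWt q ((k : ZMod q) * (t : ZMod q))}.ncard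
      = q.divisors.card - 1 := by
  have hq0 : 0 < q := by omega
  haveI : NeZero q := ⟨by omega⟩
  have hS : ∀ t : ℕ, ∑ k ∈ Finset.Icc 1 n, leeWt q ((k : ZMod q) * (t : ZMod q))
      = ∑ k ∈ Finset.Icc 1 n, f q (k * t) := by
    intro t
    refine Finset.sum_congr rfl fun k _ => ?_
    have hcast : ((k : ZMod q) * (t : ZMod q)) = ((k * t : ℕ) : ZMod q) := by push_cast; ring
    rw [hcast, leeWt, ZMod.val_natCast]
    rfl
  have hset : {w : ℕ | ∃ t : ℕ, 1 ≤ t ∧ t ≤ q - 1 ∧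
      w = ∑ k ∈ Finset.Icc 1 n, leeWt q ((k : ZMod q) * (t : ZMod q))}
      = ↑((q.divisors.erase q).image
          (fun d => ∑ k ∈ Finset.Icc 1 n, f q (k * d))) := by
    ext w
    simp only [Set.mem_setOf_eq, Finset.coe_image, Set.mem_image, Finset.mem_coe,
      Finset.mem_erase, Nat.mem_divisors]
    constructor
    · rintro ⟨t, ht1, ht2, hw⟩
      refine ⟨Nat.gcd t q, ⟨?_, Nat.gcd_dvd_right t q, by omega⟩, ?_⟩
      · have : Nat.gcd t q ≤ t := Nat.le_of_dvd (by omega) (Nat.gcd_dvd_left t q)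
        omega
      · rw [hw, hS t]
        exact (weight_gcd hq (by omega)).symm
    · rintro ⟨d, ⟨hdq, hdvd, _⟩, hw⟩
      have hd0 : 0 < d := Nat.pos_of_dvd_of_pos hdvd hq0
      have hdlt : d < q := lt_of_le_of_ne (Nat.le_of_dvd hq0 hdvd) hdq
      refine ⟨d, hd0, by omega, ?_⟩
      rw [hS d, ← hw]
  rw [hset, Set.ncard_coe_finset]
  have hinj : Set.InjOn (fun d => ∑ k ∈ Finset.Icc 1 n, f q (k * d))
      ↑(q.divisors.erase q) := by
    intro d1 h1 d2 h2 hSeq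
    simp only [Finset.coe_erase, Set.mem_diff, Finset.mem_coe, Nat.mem_divisors,
      Set.mem_singleton_iff] at h1 h2
    simp only at hSeq
    have w1 := weight_formula hq h1.1.1 h1.2
    have w2 := weight_formula hq h2.1.1 h2.2
    have hle1 : d1 ^ 2 ≤ q ^ 2 := Nat.pow_le_pow_left (Nat.le_of_dvd hq0 h1.1.1) 2
    have hle2 : d2 ^ 2 ≤ q ^ 2 := Nat.pow_le_pow_left (Nat.le_of_dvd hq0 h2.1.1) 2
    have hsq : d1 ^ 2 = d2 ^ 2 := by omega
    exact Nat.pow_left_injective (by norm_num) hsq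
  rw [Finset.card_image_of_injOn hinj,
    Finset.card_erase_of_mem (Nat.mem_divisors_self q (by omega))]
end

section
/- Let t ≥ 1 be an integer and set q = 2t² + 2t + 1. Let C be the ZMod q-submodule of (ZMod q)² spanned by the vector (1, 2t+1). Then C equals its own dual code with respect to the standard dot product; that is, for every y ∈ (ZMod q)², y ∈ C if and only if x₁y₁ + x₂y₂ = 0 for all (x₁, x₂) ∈ C. -/
/-- For `t ≥ 1` and `q = 2t²+2t+1`, the code `C ⊆ (ZMod q)²` spanned by
`(1, 2t+1)` equals its own dual with respect to the standard dot product. -/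
theorem stmt9 (t q : ℕ) (ht : 1 ≤ t) (hq : q = 2 * t ^ 2 + 2 * t + 1) :
    ∀ y : Fin 2 → ZMod q,
      y ∈ Submodule.span (ZMod q) {![(1 : ZMod q), ((2 * t + 1 : ℕ) : ZMod q)]} ↔
      ∀ x ∈ Submodule.span (ZMod q) {![(1 : ZMod q), ((2 * t + 1 : ℕ) : ZMod q)]},
        x 0 * y 0 + x 1 * y 1 = 0 := by
  intro y
  set a : ZMod q := ((2 * t + 1 : ℕ) : ZMod q) with ha
  have haa : a * a + 1 = 0 := by
    have hn : ((2 * t + 1) * (2 * t + 1) + 1 : ℕ) = 2 * q := by rw [hq]; ring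
    have h2 : (((2 * t + 1) * (2 * t + 1) + 1 : ℕ) : ZMod q) = 0 := by
      rw [hn]; push_cast; simp
    push_cast at h2
    rw [ha]; push_cast; linear_combination h2
  constructor
  · intro hy x hx
    rw [Submodule.mem_span_singleton] at hy hx
    obtain ⟨c, rfl⟩ := hy
    obtain ⟨d, rfl⟩ := hx
    simp only [Pi.smul_apply, Matrix.cons_val_zero, Matrix.cons_val_one, Matrix.head_cons,
      smul_eq_mul]
    linear_combination d * c * haa
  · intro h
    have h1 := h ![1, a] (Submodule.mem_span_singleton_self _)
    simp only [Matrix.cons_val_zero, Matrix.cons_val_one, Matrix.head_cons, one_mul] at h1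
    rw [Submodule.mem_span_singleton]
    refine ⟨y 0, funext fun i => ?_⟩
    fin_cases i
    · simp
    · show y 0 • (![1, a] 1) = y 1
      simp only [Matrix.cons_val_one, Matrix.head_cons, Matrix.cons_val_zero, smul_eq_mul]
      linear_combination a * h1 - (y 1) * haa
end

section
/- Let T₁ = {000, 110, 011, 101}, T₂ = {000, 100}, T₃ = {000, 010}, T₄ = {000, 001}, T₅ = {000, 111} be the indicated subsets of (ZMod 2)³, and let C = {(c₁, …, c₅) : cᵢ ∈ Tᵢ for all i, and c₁ + c₂ + c₃ + c₄ + c₅ = 0 in (ZMod 2)³}. Then C is a 1-perfect code in the mixed alphabet space X = T₁ × T₂ × T₃ × T₄ × T₅: for every x ∈ X there exists a unique c ∈ C such that x and c differ in at most one of the five coordinates. -/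
/-- The ambient alphabet `(ZMod 2)³`. -/
abbrev V : Type := ZMod 2 × ZMod 2 × ZMod 2

/-- The five subgroups `T₁,…,T₅` of `(ZMod 2)³` whose nonzero parts partition
the nonzero elements. -/
def T : Fin 5 → Finset V :=
  ![{(0,0,0), (1,1,0), (0,1,1), (1,0,1)},
    {(0,0,0), (1,0,0)},
    {(0,0,0), (0,1,0)},
    {(0,0,0), (0,0,1)},
    {(0,0,0), (1,1,1)}]

/-- The code `C = {(c₁,…,c₅) : cᵢ ∈ Tᵢ, c₁+⋯+c₅ = 0}`. -/
def C : Finset (Fin 5 → V) :=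
  Finset.univ.filter (fun c => (∀ i, c i ∈ T i) ∧ ∑ i, c i = 0)

/-!
Write `s = ∑ i, x i`. A word `c` that agrees with `x` off a coordinate `j` has `∑ c = 0` exactly
when `c j = x j - s`; as `T j` is a subgroup, this `c` lies in `X` iff `s ∈ T j`. So the codeword
near `x` is `x` itself when `s = 0`, and otherwise is obtained by changing the coordinate `j` of the
unique `T j` containing `s`.
-/

open Function

section
variable {ι : Type*} {β : ι → Type*} [Fintype ι] [∀ i, DecidableEq (β i)]

theorem hammingDist_update_le_one [DecidableEq ι] (x : ∀ i, β i) (j : ι) (a : β j) :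
    hammingDist x (update x j a) ≤ 1 := by
  have hj : ∀ i, x i ≠ update x j a i → i = j := fun i hi =>
    not_not.mp fun hij => hi (update_of_ne hij a x).symm
  refine Finset.card_le_one.mpr fun i hi k hk => ?_
  simp only [Finset.mem_filter, Finset.mem_univ, true_and] at hi hk
  exact (hj i hi).trans (hj k hk).symm

theorem eq_or_exists_of_hammingDist_le_one {x y : ∀ i, β i} (h : hammingDist x y ≤ 1) :
    x = y ∨ ∃ j, x j ≠ y j ∧ ∀ i ≠ j, x i = y i := by
  by_cases hxy : x = y
  · exact .inl hxy
  obtain ⟨j, hj⟩ := Function.ne_iff.mp hxy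
  refine .inr ⟨j, hj, fun i hij => not_not.mp fun hi => hij ?_⟩
  exact Finset.card_le_one.mp h i (by simpa using hi) j (by simpa using hj)

end

section
variable {ι G : Type*} [Fintype ι] [AddCommGroup G]

theorem sum_sub_sum_eq_of_forall_ne {x y : ι → G} {j : ι} (h : ∀ i ≠ j, x i = y i) :
    ∑ i, x i - ∑ i, y i = x j - y j := by
  rw [← Finset.sum_sub_distrib]
  exact Fintype.sum_eq_single j fun i hi => sub_eq_zero.mpr (h i hi)

variable [DecidableEq ι] [DecidableEq G]

theorem existsUnique_sum_eq_zero_hammingDist_le_one (T : ι → AddSubgroup G)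
    (hT : ∀ v ≠ 0, ∃! i, v ∈ T i) (x : ι → G) (hx : ∀ i, x i ∈ T i) :
    ∃! c : ι → G, ((∀ i, c i ∈ T i) ∧ ∑ i, c i = 0) ∧ hammingDist x c ≤ 1 := by
  set s := ∑ i, x i with hs
  by_cases hs0 : s = 0
  · refine ⟨x, ⟨⟨hx, hs0⟩, by simp⟩, fun c ⟨⟨_, hc⟩, hxc⟩ => ?_⟩
    rcases eq_or_exists_of_hammingDist_le_one hxc with rfl | ⟨j, hj, hxc⟩
    · rfl
    · have := sum_sub_sum_eq_of_forall_ne hxc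
      rw [← hs, hs0, hc, sub_zero, eq_comm, sub_eq_zero] at this
      exact absurd this hj
  obtain ⟨j, hj, hj_unique⟩ := hT s hs0
  refine ⟨update x j (x j - s), ⟨⟨fun i => ?_, ?_⟩, hammingDist_update_le_one x j _⟩, ?_⟩
  · rcases eq_or_ne i j with rfl | hij
    · simpa using sub_mem (hx i) hj
    · simpa [hij] using hx i
  · have := sum_sub_sum_eq_of_forall_ne (x := x) (y := update x j (x j - s)) (j := j)
      fun i hi => (update_of_ne hi _ _).symm
    rwa [update_self, sub_sub_cancel, ← hs, sub_eq_self] at this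
  · rintro c ⟨⟨hcT, hc⟩, hxc⟩
    rcases eq_or_exists_of_hammingDist_le_one hxc with rfl | ⟨k, -, hxc⟩
    · exact absurd hc hs0
    have hsk : s = x k - c k := by rw [← sum_sub_sum_eq_of_forall_ne hxc, hc, sub_zero]
    obtain rfl := hj_unique k (hsk ▸ sub_mem (hx k) (hcT k))
    rw [eq_update_iff, hsk, sub_sub_cancel]
    exact ⟨rfl, fun i hi => (hxc i hi).symm⟩

end

theorem T_add_mem : ∀ i, ∀ a ∈ T i, ∀ b ∈ T i, a + b ∈ T i := by decide

theorem T_neg_mem : ∀ i, ∀ a ∈ T i, -a ∈ T i := by decide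

theorem zero_mem_T : ∀ i, (0 : V) ∈ T i := by decide

theorem existsUnique_mem_T : ∀ v : V, v ≠ 0 → ∃! i, v ∈ T i := by
  unfold ExistsUnique; decide

def TSubgroup (i : Fin 5) : AddSubgroup V where
  carrier := T i
  add_mem' := fun ha hb => T_add_mem i _ ha _ hb
  zero_mem' := zero_mem_T i
  neg_mem' := T_neg_mem i _

@[simp] theorem mem_TSubgroup {i : Fin 5} {a : V} : a ∈ TSubgroup i ↔ a ∈ T i := by
  rfl

/-- `C` is a 1-perfect code in the mixed alphabet space `X = T₁ × ⋯ × T₅`: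
every `x ∈ X` is within Hamming distance 1 of a unique codeword. -/
theorem stmt13 :
    ∀ x : Fin 5 → V, (∀ i, x i ∈ T i) →
      ∃! c : Fin 5 → V, c ∈ C ∧
        (Finset.univ.filter (fun i => x i ≠ c i)).card ≤ 1 := by
  intro x hx
  simpa only [C, Finset.mem_filter, Finset.mem_univ, true_and, mem_TSubgroup, hammingDist] using
    existsUnique_sum_eq_zero_hammingDist_le_one TSubgroup existsUnique_mem_T x hx
end
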